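/- For any integers t, l ≥ 1 and any n ≥ 2(t+l), there exists a real r×n matrix H with r = 2(t+l) rows such that ||Hz||₀ ≥ 2l+1 for every nonzero z ∈ ℝⁿ with ||z||₀ ≤ 2t; moreover no matrix with fewer rows has this property. -/

import Mathlib

/-!
Any square submatrix of a Cauchy matrix `(x i - y j)⁻¹` is again a Cauchy matrix and hence
nonsingular: clearing denominators turns a kernel vector `c` into a polynomial
`∑ j, c j ∏_{k ≠ j} (X - y k)` of degree `< #columns` vanishing at every `x i`. So if `z ≠ 0`, the
rows on which `Hz` vanishes number fewer than the columns in the support of `z`, i.e.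
`r < wt z + wt (H z)`; with `r = 2(t+l)` and `wt z ≤ 2t` this gives `wt (H z) ≥ 2l + 1`.
Conversely, for any `H` with `r` rows, the conditions "`z` is supported on `2t` fixed columns and
`Hz` vanishes on `min r (2t - 1)` fixed rows" are fewer than `n` linear conditions, so some `z ≠ 0`
satisfies them, and it has `wt (H z) ≤ r + 1 - 2t`.

The witness is the Cauchy matrix `1 / (i + j + 1)` rather than a Vandermonde matrix: with nodes
merely distinct, Vandermonde submatrices on non-consecutive rows can be singular (rows `a⁰, a²` at
nodes `±1`).
-/

open Matrix Finset

/-- Hamming weight (number of nonzero coordinates) of a real vector. -/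
noncomputable def wt {m : ℕ} (v : Fin m → ℝ) : ℕ := (Finset.univ.filter (fun i => v i ≠ 0)).card

def cauchyMatrix {K ι κ : Type*} [Field K] (x : ι → K) (y : κ → K) : Matrix ι κ K :=
  Matrix.of fun i j => (x i - y j)⁻¹

open Polynomial Lagrange in
theorem eq_zero_of_cauchyMatrix_mulVec_eq_zero {K ι κ : Type*} [Field K] [Fintype ι]
    [Fintype κ] {x : ι → K} {y : κ → K} (hx : Function.Injective x) (hy : Function.Injective y)
    (hxy : ∀ i j, x i ≠ y j) (hcard : Fintype.card κ ≤ Fintype.card ι) {c : κ → K}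
    (hc : cauchyMatrix x y *ᵥ c = 0) : c = 0 := by
  classical
  set P : K[X] := ∑ j, c j • nodal (univ.erase j) y
  have hP_deg : P.degree < #(univ : Finset ι) := by
    refine (degree_sum_le _ _).trans_lt ((Finset.sup_lt_iff (WithBot.bot_lt_coe _)).2
      fun j _ => (degree_smul_le _ _).trans_lt ?_)
    rw [degree_nodal, card_erase_of_mem (mem_univ j), card_univ, card_univ]
    have : 0 < Fintype.card κ := Fintype.card_pos_iff.2 ⟨j⟩
    exact_mod_cast (Nat.sub_lt this one_pos).trans_le hcard
  have hP_zero : P = 0 := by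
    refine eq_zero_of_degree_lt_of_eval_index_eq_zero _ hx.injOn hP_deg fun i _ => ?_
    have hrow : ∀ j, c j * eval (x i) (nodal (univ.erase j) y) =
        eval (x i) (nodal univ y) * ((x i - y j)⁻¹ * c j) := fun j => by
      rw [nodal_eq_mul_nodal_erase (mem_univ j), eval_mul, eval_sub, eval_X, eval_C]
      field_simp [sub_ne_zero.2 (hxy i j)]
    have := congrFun hc i
    simp only [mulVec, dotProduct, cauchyMatrix, of_apply, Pi.zero_apply] at this
    simp only [P, eval_finsetSum, eval_smul, smul_eq_mul, hrow, ← mul_sum, this, mul_zero]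
  funext j
  have hPj : eval (y j) P = c j * eval (y j) (nodal (univ.erase j) y) := by
    simp only [P, eval_finsetSum, eval_smul, smul_eq_mul]
    refine sum_eq_single j (fun k _ hkj => ?_) (by simp)
    rw [eval_nodal_at_node (mem_erase.2 ⟨Ne.symm hkj, mem_univ j⟩), mul_zero]
  have hnode : eval (y j) (nodal (univ.erase j) y) ≠ 0 :=
    eval_nodal_not_at_node fun k hk => hy.ne (mem_erase.1 hk).1.symm
  simpa [hP_zero, hnode] using hPj

theorem wt_le_card_of_support_subset {m : ℕ} {v : Fin m → ℝ} {s : Finset (Fin m)}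
    (h : ∀ i, v i ≠ 0 → i ∈ s) : wt v ≤ #s :=
  card_le_card fun i hi => h i (mem_filter.1 hi).2

theorem card_filter_eq_zero_add_wt {m : ℕ} (v : Fin m → ℝ) : #{i | v i = 0} + wt v = m := by
  rw [wt, add_comm]
  simpa using card_filter_add_card_filter_not (s := univ) (fun i => v i ≠ 0)

theorem lt_wt_add_wt_cauchyMatrix_mulVec {r n : ℕ} {x : Fin r → ℝ} {y : Fin n → ℝ}
    (hx : Function.Injective x) (hy : Function.Injective y) (hxy : ∀ i j, x i ≠ y j)
    {z : Fin n → ℝ} (hz : z ≠ 0) : r < wt z + wt (cauchyMatrix x y *ᵥ z) := by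
  by_contra! hlt
  set Z : Finset (Fin r) := {i | (cauchyMatrix x y *ᵥ z) i = 0}
  set S : Finset (Fin n) := {j | z j ≠ 0}
  have hcard : #S ≤ #Z := by
    have hZ : #Z + _ = r := card_filter_eq_zero_add_wt (cauchyMatrix x y *ᵥ z)
    have hS : wt z = #S := rfl
    omega
  have hsub : cauchyMatrix (fun i : Z => x i) (fun j : S => y j) *ᵥ (fun j : S => z j) = 0 := by
    funext i
    have hi := (mem_filter.1 i.2).2
    simp only [mulVec, dotProduct, cauchyMatrix, of_apply] at hi ⊢
    rw [sum_coe_sort S fun j => (x i - y j)⁻¹ * z j,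
      sum_filter_of_ne fun j _ h => right_ne_zero_of_mul h, hi, Pi.zero_apply]
  have := eq_zero_of_cauchyMatrix_mulVec_eq_zero (hx.comp Subtype.val_injective)
    (hy.comp Subtype.val_injective) (fun i j => hxy _ _) (by simpa using hcard) hsub
  obtain ⟨j, hj⟩ := Function.ne_iff.1 hz
  exact hj (congrFun this ⟨j, mem_filter.2 ⟨mem_univ j, hj⟩⟩)

theorem Matrix.exists_ne_zero_support_subset_mulVec_eq_zero_of_card_lt {K m n : Type*} [Field K]
    [Fintype m] [Fintype n] (H : Matrix m n K) (S : Finset m) (C : Finset n) (h : #S < #C) :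
    ∃ z ≠ 0, (∀ j ∉ C, z j = 0) ∧ ∀ i ∈ S, (H *ᵥ z) i = 0 := by
  classical
  let f : (n → K) →ₗ[K] (S → K) × (↥(Cᶜ) → K) :=
    ((LinearMap.funLeft K K Subtype.val).comp H.mulVecLin).prod
      (LinearMap.funLeft K K Subtype.val)
  have hf : LinearMap.ker f ≠ ⊥ := LinearMap.ker_ne_bot_of_finrank_lt <| by
    simp only [Module.finrank_prod, Module.finrank_fintype_fun_eq_card, Fintype.card_coe,
      card_compl]
    have := C.card_le_univ
    omega
  obtain ⟨z, hz, hz0⟩ := (Submodule.ne_bot_iff _).1 hf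
  simp only [LinearMap.mem_ker, f, LinearMap.prod_apply, Function.prod_apply, Prod.mk_eq_zero,
    funext_iff, LinearMap.comp_apply, LinearMap.funLeft_apply, Matrix.mulVecLin_apply, Pi.zero_apply,
    Subtype.forall, mem_compl] at hz
  exact ⟨z, hz0, hz.2, hz.1⟩

theorem exists_wt_le_wt_mulVec_le {r n s : ℕ} (H : Matrix (Fin r) (Fin n) ℝ) (hs : 0 < s)
    (hsn : s ≤ n) : ∃ z ≠ 0, wt z ≤ s ∧ wt (H *ᵥ z) ≤ r + 1 - s := by
  obtain ⟨S, -, hS⟩ := exists_subset_card_eq (s := (univ : Finset (Fin r)))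
    (n := min r (s - 1)) (by simp)
  obtain ⟨C, -, hC⟩ := exists_subset_card_eq (s := (univ : Finset (Fin n))) (n := s) (by simpa)
  obtain ⟨z, hz, hzC, hHz⟩ :=
    H.exists_ne_zero_support_subset_mulVec_eq_zero_of_card_lt S C (by omega)
  refine ⟨z, hz, hC ▸ wt_le_card_of_support_subset fun j hj => ?_, ?_⟩
  · by_contra hjC; exact hj (hzC j hjC)
  · calc wt (H *ᵥ z) ≤ #Sᶜ := wt_le_card_of_support_subset fun i hi => by
          rw [mem_compl]; exact fun hiS => hi (hHz i hiS)
      _ ≤ r + 1 - s := by rw [card_compl, hS, Fintype.card_fin]; omega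

theorem optimal_CS_matrices_exist_general {n t l : ℕ} (ht : 1 ≤ t)
    (hn : 2 * (t + l) ≤ n) :
    (∃ H : Matrix (Fin (2 * (t + l))) (Fin n) ℝ,
      ∀ z : Fin n → ℝ, z ≠ 0 → wt z ≤ 2 * t → 2 * l + 1 ≤ wt (H.mulVec z)) ∧
    (∀ (r : ℕ) (H : Matrix (Fin r) (Fin n) ℝ),
      (∀ z : Fin n → ℝ, z ≠ 0 → wt z ≤ 2 * t → 2 * l + 1 ≤ wt (H.mulVec z)) →
      2 * (t + l) ≤ r) := by
  constructor
  · have hx : Function.Injective fun i : Fin (2 * (t + l)) => (i : ℝ) :=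
      Nat.cast_injective.comp Fin.val_injective
    have hy : Function.Injective fun j : Fin n => -((j : ℝ) + 1) :=
      (neg_injective.comp (add_left_injective 1)).comp (Nat.cast_injective.comp Fin.val_injective)
    refine ⟨cauchyMatrix (fun i => (i : ℝ)) (fun j : Fin n => -((j : ℝ) + 1)), fun z hz hwt => ?_⟩
    have hxy (i : Fin (2 * (t + l))) (j : Fin n) : (i : ℝ) ≠ -((j : ℝ) + 1) := by
      rw [ne_eq, ← sub_eq_zero, sub_neg_eq_add]; positivity
    have := lt_wt_add_wt_cauchyMatrix_mulVec hx hy hxy hz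
    omega
  · intro r H hH
    obtain ⟨z, hz, hwt, hwtH⟩ := exists_wt_le_wt_mulVec_le H (s := 2 * t) (by omega) (by omega)
    have := hH z hz hwt
    omega

theorem optimal_CS_matrices_exist {n t l : ℕ} (ht : 1 ≤ t) (hl : 1 ≤ l)
    (hn : 2 * (t + l) ≤ n) :
    (∃ H : Matrix (Fin (2 * (t + l))) (Fin n) ℝ,
      ∀ z : Fin n → ℝ, z ≠ 0 → wt z ≤ 2 * t → 2 * l + 1 ≤ wt (H.mulVec z)) ∧
    (∀ (r : ℕ) (H : Matrix (Fin r) (Fin n) ℝ),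
      (∀ z : Fin n → ℝ, z ≠ 0 → wt z ≤ 2 * t → 2 * l + 1 ≤ wt (H.mulVec z)) →
      2 * (t + l) ≤ r) :=
  optimal_CS_matrices_exist_general ht hn
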